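/- arXiv:1503.00301 — 4 statements merged into one kernel-verified Lean document; each statement's English description precedes it below -/
import Mathlib

section
/- Let T be an n×m×l binary tensor with Boolean rank r = rank_B(T). Then T admits a rank-r Boolean CP decomposition into binary factor matrices A (n×r), B (m×r), C (l×r) such that |A| + |B| + |C| ≤ 3|T|, where |·| denotes the number of nonzero entries. -/
/-!
Among all rank-`r` decompositions of `T` choose one of minimal total weight
`|A| + |B| + |C|`. Every one-entry `A i s` is then needed: erasing it would give a lighter
decomposition, so some entry `(i, j, k)` of `T` is covered by the component `s` alone. This
assigns to each one-entry of `A` a distinct one-entry of `T`, whence `|A| ≤ |T|`; cyclically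
rotating the three modes of the tensor gives the same bound for `B` and `C`.
-/

/-- `A`, `B`, `C` form a rank-`r` Boolean CP decomposition of the binary tensor `T`:
`T = ⋁_{s=1}^r a_{:s} ⊠ b_{:s} ⊠ c_{:s}`. -/
def IsBoolCP {n m l r : ℕ} (T : Fin n → Fin m → Fin l → Bool)
    (A : Fin n → Fin r → Bool) (B : Fin m → Fin r → Bool) (C : Fin l → Fin r → Bool) :
    Prop :=
  ∀ i j k, T i j k = decide (∃ s : Fin r, (A i s && B j s && C k s) = true)

/-- The Boolean rank of a binary tensor: the least `r` admitting a rank-`r` Boolean CP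
decomposition. -/
noncomputable def boolRank {n m l : ℕ} (T : Fin n → Fin m → Fin l → Bool) : ℕ :=
  sInf {r : ℕ | ∃ (A : Fin n → Fin r → Bool) (B : Fin m → Fin r → Bool)
    (C : Fin l → Fin r → Bool), IsBoolCP T A B C}

def nnz {a b : ℕ} (f : Fin a → Fin b → Bool) : ℕ :=
  (Finset.univ.filter fun x : Fin a × Fin b => f x.1 x.2 = true).card

def tensorNnz {n m l : ℕ} (T : Fin n → Fin m → Fin l → Bool) : ℕ :=
  (Finset.univ.filter fun x : Fin n × Fin m × Fin l => T x.1 x.2.1 x.2.2 = true).card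

def eraseEntry {a b : ℕ} (A : Fin a → Fin b → Bool) (i : Fin a) (s : Fin b) :
    Fin a → Fin b → Bool :=
  fun i' s' => A i' s' && decide ((i', s') ≠ (i, s))

lemma nnz_eraseEntry_lt {a b : ℕ} {A : Fin a → Fin b → Bool} {i : Fin a} {s : Fin b}
    (h : A i s = true) : nnz (eraseEntry A i s) < nnz A := by
  classical
  have hsupp : (Finset.univ.filter fun x : Fin a × Fin b => eraseEntry A i s x.1 x.2 = true)
      = (Finset.univ.filter fun x : Fin a × Fin b => A x.1 x.2 = true).erase (i, s) := by
    ext x; simp [eraseEntry, and_comm]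
  unfold nnz
  rw [hsupp]
  exact Finset.card_erase_lt_of_mem (by simpa using h)

lemma tensorNnz_rotate {n m l : ℕ} (T : Fin n → Fin m → Fin l → Bool) :
    tensorNnz (fun j k i => T i j k) = tensorNnz T :=
  Finset.card_nbij' (fun x => (x.2.2, x.1, x.2.1)) (fun y => (y.2.1, y.2.2, y.1))
    (fun _ h => by simpa using h) (fun _ h => by simpa using h) (fun _ _ => rfl) (fun _ _ => rfl)

section

variable {n m l r : ℕ} {T : Fin n → Fin m → Fin l → Bool}
  {A : Fin n → Fin r → Bool} {B : Fin m → Fin r → Bool} {C : Fin l → Fin r → Bool}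

lemma isBoolCP_iff : IsBoolCP T A B C ↔
    ∀ i j k, T i j k = true ↔ ∃ s, A i s = true ∧ B j s = true ∧ C k s = true := by
  refine forall₃_congr fun i j k => ?_
  rw [Bool.eq_iff_iff]
  simp only [decide_eq_true_eq, Bool.and_eq_true, and_assoc]

lemma IsBoolCP.rotate (h : IsBoolCP T A B C) : IsBoolCP (fun j k i => T i j k) B C A := by
  rw [isBoolCP_iff] at h ⊢
  intro j k i
  simp only [h i j k]
  exact exists_congr fun s => by tauto

lemma IsBoolCP.eraseEntry (hT : IsBoolCP T A B C) {i : Fin n} {s : Fin r}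
    (hcov : ∀ j k, B j s = true → C k s = true →
      ∃ s', A i s' = true ∧ B j s' = true ∧ C k s' = true ∧ s' ≠ s) :
    IsBoolCP T (eraseEntry A i s) B C := by
  rw [isBoolCP_iff] at hT ⊢
  intro i' j k
  rw [hT]
  simp only [_root_.eraseEntry, Bool.and_eq_true, decide_eq_true_eq]
  constructor
  · rintro ⟨s', hA, hB, hC⟩
    by_cases hi : (i', s') = (i, s)
    · obtain ⟨rfl, rfl⟩ := Prod.mk.inj hi
      obtain ⟨s'', hA'', hB'', hC'', hne⟩ := hcov j k hB hC
      exact ⟨s'', ⟨hA'', by simpa using hne⟩, hB'', hC''⟩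
    · exact ⟨s', ⟨hA, hi⟩, hB, hC⟩
  · rintro ⟨s', ⟨hA, -⟩, hB, hC⟩
    exact ⟨s', hA, hB, hC⟩

lemma IsBoolCP.exists_private_entry (hT : IsBoolCP T A B C)
    (hmin : ∀ A', IsBoolCP T A' B C → nnz A ≤ nnz A') {i : Fin n} {s : Fin r}
    (h : A i s = true) :
    ∃ j k, B j s = true ∧ C k s = true ∧
      ∀ s', A i s' = true → B j s' = true → C k s' = true → s' = s := by
  by_contra! hcov
  exact (hmin _ (hT.eraseEntry hcov)).not_gt (nnz_eraseEntry_lt h)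

lemma IsBoolCP.nnz_le_tensorNnz_of_minimal (hT : IsBoolCP T A B C)
    (hmin : ∀ A', IsBoolCP T A' B C → nnz A ≤ nnz A') : nnz A ≤ tensorNnz T := by
  refine Finset.card_le_card_of_forall_subsingleton
    (fun (x : Fin n × Fin r) (y : Fin n × Fin m × Fin l) => x.1 = y.1 ∧ A y.1 x.2 = true ∧
      B y.2.1 x.2 = true ∧ C y.2.2 x.2 = true ∧
      ∀ s', A y.1 s' = true → B y.2.1 s' = true → C y.2.2 s' = true → s' = x.2) ?_ ?_
  · rintro ⟨i, s⟩ h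
    replace h : A i s = true := by simpa using h
    obtain ⟨j, k, hB, hC, huniq⟩ := hT.exists_private_entry hmin h
    refine ⟨(i, j, k), ?_, rfl, h, hB, hC, huniq⟩
    simpa [isBoolCP_iff.mp hT i j k] using ⟨s, h, hB, hC⟩
  · rintro ⟨i, j, k⟩ - ⟨i₁, s₁⟩ ⟨-, rfl, hA, hB, hC, -⟩ ⟨i₂, s₂⟩ ⟨-, rfl, -, -, -, huniq⟩
    rw [huniq s₁ hA hB hC]

end

lemma exists_isBoolCP {n m l : ℕ} (T : Fin n → Fin m → Fin l → Bool) :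
    ∃ r, ∃ (A : Fin n → Fin r → Bool) (B : Fin m → Fin r → Bool) (C : Fin l → Fin r → Bool),
      IsBoolCP T A B C := by
  -- one component `e_i ⊠ e_j ⊠ T i j ·` for each pair `(i, j)`
  let e : Fin (n * m) ≃ Fin n × Fin m := finProdFinEquiv.symm
  refine ⟨n * m, fun i s => decide ((e s).1 = i), fun j s => decide ((e s).2 = j),
    fun k s => T (e s).1 (e s).2 k, isBoolCP_iff.mpr fun i j k => ?_⟩
  simp only [decide_eq_true_eq]
  constructor
  · exact fun h => ⟨e.symm (i, j), by simpa using h⟩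
  · rintro ⟨s, rfl, rfl, h⟩
    exact h

lemma exists_isBoolCP_boolRank {n m l : ℕ} (T : Fin n → Fin m → Fin l → Bool) :
    ∃ (A : Fin n → Fin (boolRank T) → Bool) (B : Fin m → Fin (boolRank T) → Bool)
      (C : Fin l → Fin (boolRank T) → Bool), IsBoolCP T A B C :=
  Nat.sInf_mem (exists_isBoolCP T)

lemma exists_isBoolCP_nnz_minimal {n m l r : ℕ} {T : Fin n → Fin m → Fin l → Bool}
    (h : ∃ (A : Fin n → Fin r → Bool) (B : Fin m → Fin r → Bool) (C : Fin l → Fin r → Bool),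
      IsBoolCP T A B C) :
    ∃ (A : Fin n → Fin r → Bool) (B : Fin m → Fin r → Bool) (C : Fin l → Fin r → Bool),
      IsBoolCP T A B C ∧ ∀ (A' : Fin n → Fin r → Bool) (B' : Fin m → Fin r → Bool)
        (C' : Fin l → Fin r → Bool), IsBoolCP T A' B' C' →
        nnz A + nnz B + nnz C ≤ nnz A' + nnz B' + nnz C' := by
  obtain ⟨⟨A, B, C⟩, hCP, hmin⟩ := Set.exists_min_image
    {x : (Fin n → Fin r → Bool) × (Fin m → Fin r → Bool) × (Fin l → Fin r → Bool) |
      IsBoolCP T x.1 x.2.1 x.2.2}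
    (fun x => nnz x.1 + nnz x.2.1 + nnz x.2.2) (Set.toFinite _)
    (let ⟨A, B, C, hCP⟩ := h; ⟨(A, B, C), hCP⟩)
  exact ⟨A, B, C, hCP, fun A' B' C' h' => hmin (A', B', C') h'⟩

/-- A binary tensor `T` with Boolean rank `r` admits a rank-`r`
Boolean CP decomposition whose factors satisfy `|A| + |B| + |C| ≤ 3|T|`. -/
theorem exists_boolCP_nnz_le (n m l : ℕ) (T : Fin n → Fin m → Fin l → Bool)
    (r : ℕ) (hr : boolRank T = r) :
    ∃ (A : Fin n → Fin r → Bool) (B : Fin m → Fin r → Bool) (C : Fin l → Fin r → Bool),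
      IsBoolCP T A B C ∧
      (Finset.univ.filter fun x : Fin n × Fin r => A x.1 x.2 = true).card
        + (Finset.univ.filter fun x : Fin m × Fin r => B x.1 x.2 = true).card
        + (Finset.univ.filter fun x : Fin l × Fin r => C x.1 x.2 = true).card
      ≤ 3 * (Finset.univ.filter fun x : Fin n × Fin m × Fin l =>
          T x.1 x.2.1 x.2.2 = true).card := by
  subst hr
  obtain ⟨A, B, C, hCP, hmin⟩ := exists_isBoolCP_nnz_minimal (exists_isBoolCP_boolRank T)
  have hA : nnz A ≤ tensorNnz T :=
    hCP.nnz_le_tensorNnz_of_minimal fun A' h => by linarith [hmin A' B C h]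
  have hB : nnz B ≤ tensorNnz T := by
    rw [← tensorNnz_rotate]
    exact hCP.rotate.nnz_le_tensorNnz_of_minimal fun B' h => by
      linarith [hmin A B' C h.rotate.rotate]
  have hC : nnz C ≤ tensorNnz T := by
    rw [← tensorNnz_rotate, ← tensorNnz_rotate]
    exact hCP.rotate.rotate.nnz_le_tensorNnz_of_minimal fun C' h => by
      linarith [hmin A B C' h.rotate]
  exact ⟨A, B, C, hCP, by show nnz A + nnz B + nnz C ≤ 3 * tensorNnz T; omega⟩
end

section
/- Let T be an n×m×l binary tensor that has a rank-r irreducible (but not necessarily minimal) Boolean CP decomposition into binary factor matrices A (n×r), B (m×r), C (l×r). Then s(A) + s(B) + s(C) ≥ s(T), where s denotes sparsity. -/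
/-- A rank-`r` Boolean CP decomposition is reducible if some rank-1 component can be
dropped without changing the represented tensor. -/
def BoolCPReducible {n m l r : ℕ}
    (A : Fin n → Fin r → Bool) (B : Fin m → Fin r → Bool) (C : Fin l → Fin r → Bool) :
    Prop :=
  ∃ t : Fin r, ∀ i j k,
    decide (∃ s : Fin r, (A i s && B j s && C k s) = true)
      = decide (∃ s ∈ Finset.univ.erase t, (A i s && B j s && C k s) = true)

open Finset

theorem add_add_le_two_add_mul_mul {x y z : ℝ} (hx : x ≤ 1) (hy₀ : 0 ≤ y) (hy : y ≤ 1)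
    (hz : z ≤ 1) : x + y + z ≤ 2 + x * y * z := by
  nlinarith [mul_nonneg (sub_nonneg.2 hx) (sub_nonneg.2 hy),
    mul_nonneg (sub_nonneg.2 hz) (sub_nonneg.2 (mul_le_one₀ hx hy₀ hy))]

theorem sum_div_add_sum_div_add_sum_div_le {ι : Type*} [Fintype ι] {n m l t : ℕ}
    (x y z : ι → ℕ) (hx : ∀ s, x s ≤ n) (hy : ∀ s, y s ≤ m) (hz : ∀ s, z s ≤ l)
    (hxyz : ∀ s, x s * y s * z s ≤ t) :
    ((∑ s, x s : ℕ) : ℝ) / (n * Fintype.card ι) + ((∑ s, y s : ℕ) : ℝ) / (m * Fintype.card ι)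
      + ((∑ s, z s : ℕ) : ℝ) / (l * Fintype.card ι) ≤ 2 + (t : ℝ) / (n * m * l) := by
  -- also for `b = 0`, where `a / 0 = 0`; so no dimension needs to be positive
  have density_le_one {a b : ℕ} (h : a ≤ b) : (a : ℝ) / b ≤ 1 :=
    div_le_one_of_le₀ (by exact_mod_cast h) b.cast_nonneg
  have hcol (s : ι) : (x s : ℝ) / n + (y s : ℝ) / m + (z s : ℝ) / l ≤ 2 + (t : ℝ) / (n * m * l) :=
    calc (x s : ℝ) / n + (y s : ℝ) / m + (z s : ℝ) / l
        ≤ 2 + (x s : ℝ) / n * ((y s : ℝ) / m) * ((z s : ℝ) / l) :=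
          add_add_le_two_add_mul_mul (density_le_one (hx s)) (by positivity)
            (density_le_one (hy s)) (density_le_one (hz s))
      _ = 2 + ((x s * y s * z s : ℕ) : ℝ) / (n * m * l) := by
          rw [div_mul_div_comm, div_mul_div_comm]; push_cast; rfl
      _ ≤ 2 + (t : ℝ) / (n * m * l) := by gcongr; exact_mod_cast hxyz s
  calc ((∑ s, x s : ℕ) : ℝ) / (n * Fintype.card ι) + ((∑ s, y s : ℕ) : ℝ) / (m * Fintype.card ι)
        + ((∑ s, z s : ℕ) : ℝ) / (l * Fintype.card ι)
      = (∑ s, ((x s : ℝ) / n + (y s : ℝ) / m + (z s : ℝ) / l)) / Fintype.card ι := by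
        push_cast
        simp only [sum_add_distrib, ← sum_div, div_div, add_div]
    _ ≤ 2 + (t : ℝ) / (n * m * l) := by
        refine div_le_of_le_mul₀ (by positivity) (by positivity) ?_
        have hsum := sum_le_sum fun s (_ : s ∈ univ) => hcol s
        rwa [sum_const, card_univ, nsmul_eq_mul, mul_comm] at hsum

theorem card_filter_prod_eq_sum_card_filter {α β : Type*} [Fintype α] [Fintype β]
    (f : α → β → Bool) : #{x : α × β | f x.1 x.2 = true} = ∑ b, #{a | f a b = true} := by
  rw [card_filter, Fintype.sum_prod_type, sum_comm]
  simp only [card_filter]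

theorem IsBoolCP.card_mul_card_mul_card_le {n m l r : ℕ} {T : Fin n → Fin m → Fin l → Bool}
    {A : Fin n → Fin r → Bool} {B : Fin m → Fin r → Bool} {C : Fin l → Fin r → Bool}
    (hCP : IsBoolCP T A B C) (s : Fin r) :
    #{i | A i s = true} * #{j | B j s = true} * #{k | C k s = true}
      ≤ #{x : Fin n × Fin m × Fin l | T x.1 x.2.1 x.2.2 = true} := by
  rw [mul_assoc, ← card_product, ← card_product]
  refine card_le_card fun x hx => ?_
  simp only [mem_product, mem_filter, mem_univ, true_and] at hx ⊢
  rw [hCP, decide_eq_true_eq]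
  exact ⟨s, by simp [hx.1, hx.2.1, hx.2.2]⟩

theorem sparsity_boolCP_factors_general (n m l r : ℕ) (T : Fin n → Fin m → Fin l → Bool)
    (A : Fin n → Fin r → Bool) (B : Fin m → Fin r → Bool) (C : Fin l → Fin r → Bool)
    (hCP : IsBoolCP T A B C) :
    (1 - ((Finset.univ.filter fun x : Fin n × Fin r => A x.1 x.2 = true).card : ℝ) / (n * r))
      + (1 - ((Finset.univ.filter fun x : Fin m × Fin r => B x.1 x.2 = true).card : ℝ) / (m * r))
      + (1 - ((Finset.univ.filter fun x : Fin l × Fin r => C x.1 x.2 = true).card : ℝ) / (l * r))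
    ≥ 1 - ((Finset.univ.filter fun x : Fin n × Fin m × Fin l =>
        T x.1 x.2.1 x.2.2 = true).card : ℝ) / (n * m * l) := by
  have h := sum_div_add_sum_div_add_sum_div_le (fun s => #{i | A i s = true})
    (fun s => #{j | B j s = true}) (fun s => #{k | C k s = true})
    (fun _ => card_le_univ _) (fun _ => card_le_univ _) (fun _ => card_le_univ _)
    hCP.card_mul_card_mul_card_le
  rw [← card_filter_prod_eq_sum_card_filter A, ← card_filter_prod_eq_sum_card_filter B,
    ← card_filter_prod_eq_sum_card_filter C] at h
  simp only [Fintype.card_fin] at h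
  linarith

/-- If a binary tensor `T` has a rank-`r` irreducible (not necessarily
minimal) Boolean CP decomposition into `A`, `B`, `C`, then
`s(A) + s(B) + s(C) ≥ s(T)` where `s` denotes sparsity. -/
theorem sparsity_boolCP_factors (n m l r : ℕ) (T : Fin n → Fin m → Fin l → Bool)
    (A : Fin n → Fin r → Bool) (B : Fin m → Fin r → Bool) (C : Fin l → Fin r → Bool)
    (hCP : IsBoolCP T A B C) (hirr : ¬ BoolCPReducible A B C) :
    (1 - ((Finset.univ.filter fun x : Fin n × Fin r => A x.1 x.2 = true).card : ℝ) / (n * r))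
      + (1 - ((Finset.univ.filter fun x : Fin m × Fin r => B x.1 x.2 = true).card : ℝ) / (m * r))
      + (1 - ((Finset.univ.filter fun x : Fin l × Fin r => C x.1 x.2 = true).card : ℝ) / (l * r))
    ≥ 1 - ((Finset.univ.filter fun x : Fin n × Fin m × Fin l =>
        T x.1 x.2.1 x.2.2 = true).card : ℝ) / (n * m * l) :=
  sparsity_boolCP_factors_general n m l r T A B C hCP
end

section
/- Let T be an n×m×l binary tensor with a rank-r irreducible Boolean CP decomposition into binary factor matrices A (n×r), B (m×r), C (l×r). Define the residual tensors by R_1 = T and, for k = 2,…,r, R_k = R_{k−1} ∧ ¬(a_{:k}⊠b_{:k}⊠c_{:k}), where ∧ and ¬ are elementwise Boolean AND and NOT. Then s(R_k) > s(R_{k−1}) for every k = 2,…,r. -/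
/-- Residual tensors (0-indexed): `bcpResidual 0 = T` is the paper's `R₁`, and
`bcpResidual t = Rₜ₊₁ = Rₜ ∧ ¬(a_{:t+1} ⊠ b_{:t+1} ⊠ c_{:t+1})` (columns 0-indexed). -/
def bcpResidual {n m l r : ℕ} (T : Fin n → Fin m → Fin l → Bool)
    (A : Fin n → Fin r → Bool) (B : Fin m → Fin r → Bool) (C : Fin l → Fin r → Bool) :
    ℕ → Fin n → Fin m → Fin l → Bool
  | 0 => T
  | t + 1 => fun i j k =>
      bcpResidual T A B C t i j k &&
        !(if h : t + 1 < r then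
            A i ⟨t + 1, h⟩ && B j ⟨t + 1, h⟩ && C k ⟨t + 1, h⟩
          else false)

/-- The sparsity of a binary tensor. -/
noncomputable def tsparsity {n m l : ℕ} (T : Fin n → Fin m → Fin l → Bool) : ℝ :=
  1 - ((Finset.univ.filter fun x : Fin n × Fin m × Fin l =>
    T x.1 x.2.1 x.2.2 = true).card : ℝ) / (n * m * l)

lemma bcpResidual_true_iff {n m l r : ℕ} (T : Fin n → Fin m → Fin l → Bool)
    (A : Fin n → Fin r → Bool) (B : Fin m → Fin r → Bool) (C : Fin l → Fin r → Bool)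
    (t : ℕ) (i : Fin n) (j : Fin m) (k : Fin l) :
    bcpResidual T A B C t i j k = true ↔
      T i j k = true ∧ ∀ s : Fin r, 0 < s.val → s.val ≤ t →
        (A i s && B j s && C k s) = false := by
  induction t with
  | zero =>
    constructor
    · intro h
      exact ⟨h, fun s hs0 hs1 => by omega⟩
    · exact fun h => h.1
  | succ t ih =>
    simp only [bcpResidual, Bool.and_eq_true, ih, Bool.not_eq_true']
    constructor
    · rintro ⟨⟨hT, hall⟩, hd⟩
      refine ⟨hT, fun s hs0 hs1 => ?_⟩
      rcases Nat.lt_or_ge s.val (t+1) with h | h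
      · exact hall s hs0 (by omega)
      · have hsv : s.val = t + 1 := by omega
        have hr : t + 1 < r := hsv ▸ s.isLt
        rw [dif_pos hr] at hd
        have hse : s = ⟨t+1, hr⟩ := Fin.ext hsv
        rwa [hse]
    · rintro ⟨hT, hall⟩
      refine ⟨⟨hT, fun s hs0 hs1 => hall s hs0 (by omega)⟩, ?_⟩
      by_cases hr : t + 1 < r
      · rw [dif_pos hr]; exact hall ⟨t+1, hr⟩ (by simp) le_rfl
      · rw [dif_neg hr]

/-- For a rank-`r` irreducible Boolean CP decomposition of `T`, the
sparsities of the bcpResidual tensors `R₁ = T`, `Rₖ = Rₖ₋₁ ∧ ¬(a_{:k} ⊠ b_{:k} ⊠ c_{:k})`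
are strictly increasing: `s(Rₖ) > s(Rₖ₋₁)` for `k = 2,…,r`. -/
theorem residual_sparsity_strict_mono (n m l r : ℕ) (T : Fin n → Fin m → Fin l → Bool)
    (A : Fin n → Fin r → Bool) (B : Fin m → Fin r → Bool) (C : Fin l → Fin r → Bool)
    (hCP : IsBoolCP T A B C) (hirr : ¬ BoolCPReducible A B C) :
    ∀ t : ℕ, t + 1 < r →
      tsparsity (bcpResidual T A B C (t + 1)) > tsparsity (bcpResidual T A B C t) := by
  intro t ht
  rw [BoolCPReducible] at hirr
  push_neg at hirr
  obtain ⟨i, j, k, hne⟩ := hirr ⟨t+1, ht⟩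
  have hfull : ∃ s : Fin r, (A i s && B j s && C k s) = true := by
    by_contra h
    apply hne
    simp only [decide_eq_decide]
    exact ⟨fun hx => absurd hx h, fun ⟨s, _, hs⟩ => absurd ⟨s, hs⟩ h⟩
  have herased : ¬ ∃ s ∈ Finset.univ.erase (⟨t+1, ht⟩ : Fin r),
      (A i s && B j s && C k s) = true := by
    intro h
    apply hne
    simp only [decide_eq_decide]
    exact ⟨fun _ => h, fun ⟨s, _, hs⟩ => ⟨s, hs⟩⟩
  have hothers : ∀ s : Fin r, s ≠ ⟨t+1, ht⟩ → (A i s && B j s && C k s) = false := by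
    intro s hs
    by_contra h
    exact herased ⟨s, Finset.mem_erase.mpr ⟨hs, Finset.mem_univ s⟩,
      by simpa [Bool.and_eq_true, and_assoc] using h⟩
  have hcov : (A i ⟨t+1, ht⟩ && B j ⟨t+1, ht⟩ && C k ⟨t+1, ht⟩) = true := by
    obtain ⟨s, hs⟩ := hfull
    by_cases hse : s = ⟨t+1, ht⟩
    · rwa [hse] at hs
    · rw [hothers s hse] at hs; exact absurd hs (by simp)
  have hT : T i j k = true := by
    rw [hCP i j k, decide_eq_true_eq]; exact hfull
  have hRt : bcpResidual T A B C t i j k = true := by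
    rw [bcpResidual_true_iff]
    refine ⟨hT, fun s hs0 hs1 => ?_⟩
    exact hothers s (fun hse => by simp [hse] at hs1)
  have hRt1 : bcpResidual T A B C (t+1) i j k = false := by
    show (bcpResidual T A B C t i j k && _) = false
    rw [dif_pos ht, hcov]
    simp
  set S1 := Finset.univ.filter fun x : Fin n × Fin m × Fin l =>
    bcpResidual T A B C (t+1) x.1 x.2.1 x.2.2 = true with hS1
  set S2 := Finset.univ.filter fun x : Fin n × Fin m × Fin l =>
    bcpResidual T A B C t x.1 x.2.1 x.2.2 = true with hS2
  have hsub : S1 ⊆ S2 := by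
    intro x hx
    rw [hS1, Finset.mem_filter] at hx
    rw [hS2, Finset.mem_filter]
    refine ⟨Finset.mem_univ x, ?_⟩
    have := hx.2
    rw [show bcpResidual T A B C (t+1) x.1 x.2.1 x.2.2
        = (bcpResidual T A B C t x.1 x.2.1 x.2.2 && _) from rfl,
      Bool.and_eq_true] at this
    exact this.1
  have hcard : S1.card < S2.card := by
    apply Finset.card_lt_card
    rw [Finset.ssubset_iff_of_subset hsub]
    refine ⟨(i, j, k), ?_, ?_⟩
    · rw [hS2, Finset.mem_filter]; exact ⟨Finset.mem_univ _, hRt⟩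
    · rw [hS1, Finset.mem_filter]; simp [hRt1]
  have hN : (0:ℝ) < (n:ℝ) * m * l := by
    have := i.pos; have := j.pos; have := k.pos
    positivity
  unfold tsparsity
  apply sub_lt_sub_left
  rw [div_lt_div_iff_of_pos_right hN]
  exact_mod_cast hcard
end

section
/- There exist positive integers n, m, l and an n×m×l binary tensor T such that rank_B(T) > min{n, m, l}. -/
/-- There exist positive integers `n, m, l` and an `n×m×l` binary
tensor `T` with `rank_B(T) > min{n, m, l}`. -/
theorem exists_boolRank_gt_min_dim :
    ∃ (n m l : ℕ), 0 < n ∧ 0 < m ∧ 0 < l ∧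
      ∃ T : Fin n → Fin m → Fin l → Bool, min n (min m l) < boolRank T := by
  refine ⟨2, 2, 1, by norm_num, by norm_num, by norm_num,
    (fun i j _ => i == j), ?_⟩
  have hmin : min 2 (min 2 1) = 1 := by norm_num
  rw [hmin, boolRank]
  have hne : {r : ℕ | ∃ (A : Fin 2 → Fin r → Bool) (B : Fin 2 → Fin r → Bool)
      (C : Fin 1 → Fin r → Bool),
      IsBoolCP (fun i j _ => i == j) A B C}.Nonempty := by
    refine ⟨2, (fun i s => i == s), (fun j s => j == s), (fun _ _ => true), ?_⟩
    unfold IsBoolCP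
    decide
  have h2 : 2 ≤ sInf {r : ℕ | ∃ (A : Fin 2 → Fin r → Bool)
      (B : Fin 2 → Fin r → Bool) (C : Fin 1 → Fin r → Bool),
      IsBoolCP (fun i j _ => i == j) A B C} := by
    refine le_csInf hne ?_
    rintro r ⟨A, B, C, h⟩
    by_contra hlt
    push_neg at hlt
    interval_cases r
    · have := h 0 0 0
      simp at this
    · have h00 := h 0 0 0
      have h11 := h 1 1 0
      have h01 := h 0 1 0
      simp only [show ((0 : Fin 2) == (0 : Fin 2)) = true from rfl,
        show ((1 : Fin 2) == (1 : Fin 2)) = true from rfl,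
        show ((0 : Fin 2) == (1 : Fin 2)) = false from rfl] at h00 h11 h01
      have h00' : (A 0 0 && B 0 0 && C 0 0) = true := by
        have := of_decide_eq_true h00.symm
        obtain ⟨s, hs⟩ := this
        have : s = 0 := Fin.fin_one_eq_zero s
        rwa [this] at hs
      have h11' : (A 1 0 && B 1 0 && C 0 0) = true := by
        have := of_decide_eq_true h11.symm
        obtain ⟨s, hs⟩ := this
        have : s = 0 := Fin.fin_one_eq_zero s
        rwa [this] at hs
      have : (A 0 0 && B 1 0 && C 0 0) = true := by
        simp only [Bool.and_eq_true] at h00' h11' ⊢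
        exact ⟨⟨h00'.1.1, h11'.1.2⟩, h00'.2⟩
      have : decide (∃ s : Fin 1, (A 0 s && B 1 s && C 0 s) = true) = true := by
        exact decide_eq_true ⟨0, this⟩
      rw [this] at h01
      exact absurd h01 (by simp)
  omega
end
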